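/- arXiv:1103.3489 — 5 statements merged into one kernel-verified Lean document; each statement's English description precedes it below -/
import Mathlib

section
/- Let h: ℝ → ℝ be differentiable with |h′(x)| ≤ M₁ for all x ∈ ℝ, and suppose that for some N > 0 there is M_N > 0 such that |h′(x) − h′(y)| ≤ M_N |x − y| whenever |x|, |y| ≤ N. Then for all X₁, X₂, X₃, X₄ ∈ ℝ with |X₁|, |X₂|, |X₃|, |X₄| ≤ N one has |h(X₁) − h(X₂) − h(X₃) + h(X₄)| ≤ M₁ |X₁ − X₂ − X₃ + X₄| + M_N |X₁ − X₃| (|X₁ − X₂| + |X₃ − X₄|). -/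
/-- Proposition 5.5 (difference-of-differences estimate). -/
theorem stmt_0 (h h' : ℝ → ℝ) (M₁ MN N : ℝ)
    (hM₁ : 0 < M₁) (hMN : 0 < MN) (hN : 0 < N)
    (hdiff : ∀ x : ℝ, HasDerivAt h (h' x) x)
    (hbound : ∀ x : ℝ, |h' x| ≤ M₁)
    (hlip : ∀ x y : ℝ, |x| ≤ N → |y| ≤ N → |h' x - h' y| ≤ MN * |x - y|)
    (X₁ X₂ X₃ X₄ : ℝ)
    (h1 : |X₁| ≤ N) (h2 : |X₂| ≤ N) (h3 : |X₃| ≤ N) (h4 : |X₄| ≤ N) :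
    |h X₁ - h X₂ - h X₃ + h X₄| ≤
      M₁ * |X₁ - X₂ - X₃ + X₄| + MN * |X₁ - X₃| * (|X₁ - X₂| + |X₃ - X₄|) := by
  set g : ℝ → ℝ := fun t => h (X₃ + t * (X₁ - X₃)) - h (X₄ + t * (X₂ - X₄)) with hg
  set g' : ℝ → ℝ := fun t =>
    h' (X₃ + t * (X₁ - X₃)) * (X₁ - X₃) - h' (X₄ + t * (X₂ - X₄)) * (X₂ - X₄) with hg'
  have hgd : ∀ t : ℝ, HasDerivAt g (g' t) t := by
    intro t
    have l1 : HasDerivAt (fun t : ℝ => X₃ + t * (X₁ - X₃)) (X₁ - X₃) t := by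
      simpa using ((hasDerivAt_id t).mul_const (X₁ - X₃)).const_add X₃
    have l2 : HasDerivAt (fun t : ℝ => X₄ + t * (X₂ - X₄)) (X₂ - X₄) t := by
      simpa using ((hasDerivAt_id t).mul_const (X₂ - X₄)).const_add X₄
    exact ((hdiff _).comp t l1).sub ((hdiff _).comp t l2)
  have hcont : ContinuousOn g (Set.Icc 0 1) :=
    (fun t _ => ((hgd t).differentiableAt).continuousAt.continuousWithinAt)
  obtain ⟨τ, hτ, heq⟩ := exists_hasDerivAt_eq_slope g g' (by norm_num : (0:ℝ) < 1)
    hcont (fun t _ => hgd t)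
  have hA : h X₁ - h X₂ - h X₃ + h X₄ = g' τ := by
    rw [heq]; simp [hg]; ring
  set u := X₃ + τ * (X₁ - X₃) with hu
  set v := X₄ + τ * (X₂ - X₄) with hv
  have hτ0 : 0 ≤ τ := le_of_lt hτ.1
  have hτ1 : τ ≤ 1 := le_of_lt hτ.2
  have huN : |u| ≤ N := by
    have : |u| ≤ (1 - τ) * |X₃| + τ * |X₁| := by
      have : u = (1 - τ) * X₃ + τ * X₁ := by rw [hu]; ring
      rw [this]
      calc |(1 - τ) * X₃ + τ * X₁| ≤ |(1-τ) * X₃| + |τ * X₁| := abs_add_le _ _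
        _ = (1 - τ) * |X₃| + τ * |X₁| := by
          rw [abs_mul, abs_mul, abs_of_nonneg (by linarith), abs_of_nonneg hτ0]
    nlinarith [abs_nonneg X₁, abs_nonneg X₃]
  have hvN : |v| ≤ N := by
    have : |v| ≤ (1 - τ) * |X₄| + τ * |X₂| := by
      have : v = (1 - τ) * X₄ + τ * X₂ := by rw [hv]; ring
      rw [this]
      calc |(1 - τ) * X₄ + τ * X₂| ≤ |(1-τ) * X₄| + |τ * X₂| := abs_add_le _ _
        _ = (1 - τ) * |X₄| + τ * |X₂| := by
          rw [abs_mul, abs_mul, abs_of_nonneg (by linarith), abs_of_nonneg hτ0]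
    nlinarith [abs_nonneg X₂, abs_nonneg X₄]
  have huv : |u - v| ≤ |X₁ - X₂| + |X₃ - X₄| := by
    have : u - v = (1 - τ) * (X₃ - X₄) + τ * (X₁ - X₂) := by rw [hu, hv]; ring
    rw [this]
    calc |(1 - τ) * (X₃ - X₄) + τ * (X₁ - X₂)|
        ≤ |(1-τ) * (X₃ - X₄)| + |τ * (X₁ - X₂)| := abs_add_le _ _
      _ = (1 - τ) * |X₃ - X₄| + τ * |X₁ - X₂| := by
          rw [abs_mul, abs_mul, abs_of_nonneg (by linarith), abs_of_nonneg hτ0]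
      _ ≤ |X₁ - X₂| + |X₃ - X₄| := by
          nlinarith [abs_nonneg (X₁ - X₂), abs_nonneg (X₃ - X₄)]
  have hsplit : g' τ = (h' u - h' v) * (X₁ - X₃) + h' v * (X₁ - X₂ - X₃ + X₄) := by
    rw [hg']; ring
  rw [hA, hsplit]
  calc |(h' u - h' v) * (X₁ - X₃) + h' v * (X₁ - X₂ - X₃ + X₄)|
      ≤ |(h' u - h' v) * (X₁ - X₃)| + |h' v * (X₁ - X₂ - X₃ + X₄)| := abs_add_le _ _
    _ = |h' u - h' v| * |X₁ - X₃| + |h' v| * |X₁ - X₂ - X₃ + X₄| := by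
        rw [abs_mul, abs_mul]
    _ ≤ (MN * (|X₁ - X₂| + |X₃ - X₄|)) * |X₁ - X₃| + M₁ * |X₁ - X₂ - X₃ + X₄| := by
        gcongr
        calc |h' u - h' v| ≤ MN * |u - v| := hlip u v huN hvN
          _ ≤ MN * (|X₁ - X₂| + |X₃ - X₄|) := by
              exact mul_le_mul_of_nonneg_left huv (le_of_lt hMN)
        exact hbound v
    _ = M₁ * |X₁ - X₂ - X₃ + X₄| + MN * |X₁ - X₃| * (|X₁ - X₂| + |X₃ - X₄|) := by ring
end

section
/- Let 0 < α < 1 and 0 < γ < ξ. Then ∫₀^γ (ξ − η)^{−α−1} (γ − η)^{−α} dη ≤ B(2α, 1−α) · (ξ − γ)^{−2α}, where B(2α, 1−α) := ∫₀^∞ x^{−α} (1 + x)^{−1−α} dx (a finite quantity). -/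
open MeasureTheory Set

/- Substituting `η = γ - (ξ - γ) x` maps `x ∈ (0, γ / (ξ - γ))` onto `η ∈ (0, γ)` and turns
the kernel into `(ξ - γ)^(-2α-1) x^(-α) (1 + x)^(-1-α)`; the Jacobian contributes one more factor
`ξ - γ`, and enlarging the range of `x` to `(0, ∞)` gives the beta-type integral. -/

theorem lintegral_Ioo_eq_ofReal_mul_lintegral_comp_sub_mul (f : ℝ → ENNReal) {a c : ℝ}
    (hc : 0 < c) :
    ∫⁻ η in Ioo 0 a, f η = ENNReal.ofReal c * ∫⁻ x in Ioo 0 (a / c), f (a - c * x) := by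
  have himage : (fun x => a - c * x) '' Ioo 0 (a / c) = Ioo 0 a := by
    rw [show (fun x => a - c * x) = (a - ·) ∘ (c * ·) from rfl, image_comp,
      image_mul_left_Ioo hc, image_const_sub_Ioo, mul_div_cancel₀ _ hc.ne']
    simp
  rw [← himage, lintegral_image_eq_lintegral_abs_deriv_mul (f := fun x => a - c * x)
      measurableSet_Ioo
      (fun x _ => ((hasDerivAt_id' x).const_mul c).const_sub a |>.hasDerivWithinAt)
      (fun x _ y _ h => mul_left_cancel₀ hc.ne' (sub_right_injective h)),
    ← lintegral_const_mul' _ _ ENNReal.ofReal_ne_top]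
  simp [abs_of_pos hc]

theorem rpow_kernel_comp_sub_mul (α : ℝ) {γ ξ x : ℝ} (hγξ : γ < ξ) (hx : 0 < x) :
    (ξ - (γ - (ξ - γ) * x)) ^ (-α - 1) * (γ - (γ - (ξ - γ) * x)) ^ (-α) =
      (ξ - γ) ^ (-2 * α - 1) * (x ^ (-α) * (1 + x) ^ (-1 - α)) := by
  have hc : 0 < ξ - γ := sub_pos.2 hγξ
  rw [show ξ - (γ - (ξ - γ) * x) = (ξ - γ) * (1 + x) by ring,
    show γ - (γ - (ξ - γ) * x) = (ξ - γ) * x by ring,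
    Real.mul_rpow hc.le (by linarith), Real.mul_rpow hc.le hx.le,
    show -2 * α - 1 = (-α - 1) + -α by ring, Real.rpow_add hc, show -1 - α = -α - 1 by ring]
  ring

theorem stmt_1_general (α γ ξ : ℝ) (hγξ : γ < ξ) :
    (∫⁻ η in Ioo (0:ℝ) γ, ENNReal.ofReal ((ξ - η) ^ (-α - 1) * (γ - η) ^ (-α))) ≤
      (∫⁻ x in Ioi (0:ℝ), ENNReal.ofReal (x ^ (-α) * (1 + x) ^ (-1 - α))) *
        ENNReal.ofReal ((ξ - γ) ^ (-(2 * α))) := by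
  have hc : 0 < ξ - γ := sub_pos.2 hγξ
  have hpow : (ξ - γ) * (ξ - γ) ^ (-2 * α - 1) = (ξ - γ) ^ (-(2 * α)) := by
    rw [mul_comm, ← Real.rpow_add_one hc.ne']
    ring_nf
  calc (∫⁻ η in Ioo (0:ℝ) γ, ENNReal.ofReal ((ξ - η) ^ (-α - 1) * (γ - η) ^ (-α)))
      = ENNReal.ofReal (ξ - γ) * ∫⁻ x in Ioo 0 (γ / (ξ - γ)), ENNReal.ofReal
          ((ξ - γ) ^ (-2 * α - 1)) * ENNReal.ofReal (x ^ (-α) * (1 + x) ^ (-1 - α)) := by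
        rw [lintegral_Ioo_eq_ofReal_mul_lintegral_comp_sub_mul _ hc]
        congr 1
        refine setLIntegral_congr_fun measurableSet_Ioo fun x hx => ?_
        rw [rpow_kernel_comp_sub_mul α hγξ hx.1, ENNReal.ofReal_mul (by positivity)]
    _ = ENNReal.ofReal ((ξ - γ) ^ (-(2 * α))) *
          ∫⁻ x in Ioo 0 (γ / (ξ - γ)), ENNReal.ofReal (x ^ (-α) * (1 + x) ^ (-1 - α)) := by
        rw [lintegral_const_mul' _ _ ENNReal.ofReal_ne_top, ← mul_assoc,
          ← ENNReal.ofReal_mul hc.le, hpow]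
    _ ≤ _ := by
        rw [mul_comm]
        gcongr
        exact Ioo_subset_Ioi_self

/-- the beta-type kernel estimate
`∫₀^γ (ξ − η)^{−α−1} (γ − η)^{−α} dη ≤ B(2α, 1−α) (ξ − γ)^{−2α}`. -/
theorem stmt_1 (α γ ξ : ℝ) (hα : 0 < α) (hα1 : α < 1) (hγ : 0 < γ) (hγξ : γ < ξ) :
    (∫⁻ η in Ioo (0:ℝ) γ, ENNReal.ofReal ((ξ - η) ^ (-α - 1) * (γ - η) ^ (-α))) ≤
      (∫⁻ x in Ioi (0:ℝ), ENNReal.ofReal (x ^ (-α) * (1 + x) ^ (-1 - α))) *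
        ENNReal.ofReal ((ξ - γ) ^ (-(2 * α))) :=
  stmt_1_general α γ ξ hγξ
end

section
/- Let 0 < α < 1, let ξ ∈ (0, 1], and let f: [0,1] → ℝ be measurable. Then ∫₀^ξ (ξ − η)^{−α−1} ( ∫_η^ξ |f(γ)| (γ − η)^{−α} dγ ) dη ≤ B(2α, 1−α) · ∫₀^ξ |f(γ)| (ξ − γ)^{−2α} dγ, as an inequality in [0, ∞]. -/
/-! Swapping the order of integration over the triangle `0 < η < γ < ξ` reduces the claim to a
bound, for each fixed `γ`, on `∫ (ξ - η)^(-α-1) (γ - η)^(-α) dη` over `0 < η < γ`. Enlarging the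
range to all `η < γ` and substituting `η = γ - (ξ - γ) x` turns this integral into exactly
`(ξ - γ)^(-2α) · B(2α, 1 - α)`. -/

open MeasureTheory Set

theorem setLIntegral_Ioo_Ioo_swap {μ : Measure ℝ} [SFinite μ] {a b : ℝ} {F : ℝ → ℝ → ENNReal}
    (hF : Measurable (Function.uncurry F)) :
    ∫⁻ x in Ioo a b, ∫⁻ y in Ioo x b, F x y ∂μ ∂μ =
      ∫⁻ y in Ioo a b, ∫⁻ x in Ioo a y, F x y ∂μ ∂μ := by
  set G : ℝ → ℝ → ENNReal := fun x y => (Ioi x).indicator (F x) y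
  have hG : Measurable (Function.uncurry G) := by
    have : Function.uncurry G = {p : ℝ × ℝ | p.1 < p.2}.indicator (Function.uncurry F) := by
      ext ⟨x, y⟩; simp [G, indicator_apply]
    rw [this]
    exact hF.indicator (measurableSet_lt measurable_fst measurable_snd)
  have hleft : ∀ x ∈ Ioo a b, ∫⁻ y in Ioo x b, F x y ∂μ = ∫⁻ y in Ioo a b, G x y ∂μ := by
    intro x hx
    rw [lintegral_indicator measurableSet_Ioi, Measure.restrict_restrict measurableSet_Ioi,
      Ioi_inter_Ioo, max_eq_left hx.1.le]
  have hright : ∀ y ∈ Ioo a b, ∫⁻ x in Ioo a y, F x y ∂μ = ∫⁻ x in Ioo a b, G x y ∂μ := by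
    intro y hy
    have : (fun x => G x y) = (Iio y).indicator (fun x => F x y) := by
      ext x; simp [G, indicator_apply]
    rw [this, lintegral_indicator measurableSet_Iio, Measure.restrict_restrict measurableSet_Iio,
      Iio_inter_Ioo, min_eq_left hy.2.le]
  rw [setLIntegral_congr_fun measurableSet_Ioo hleft,
    setLIntegral_congr_fun measurableSet_Ioo hright]
  exact lintegral_lintegral_swap hG.aemeasurable

theorem setLIntegral_Iio_rpow_sub_mul_rpow_sub (a b : ℝ) {γ ξ : ℝ} (hγξ : γ < ξ) :
    ∫⁻ η in Iio γ, ENNReal.ofReal ((ξ - η) ^ a) * ENNReal.ofReal ((γ - η) ^ b) =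
      ENNReal.ofReal ((ξ - γ) ^ (a + b + 1)) *
        ∫⁻ x in Ioi (0:ℝ), ENNReal.ofReal (x ^ b * (1 + x) ^ a) := by
  set c := ξ - γ
  have hc : 0 < c := sub_pos.mpr hγξ
  have himage : (fun x => γ - c * x) '' Ioi 0 = Iio γ := by
    rw [← image_image (γ - ·) (c * ·), image_mul_left_Ioi hc, image_const_sub_Ioi, mul_zero,
      sub_zero]
  have hderiv : ∀ x ∈ Ioi (0:ℝ), HasDerivWithinAt (fun x => γ - c * x) (-c) (Ioi 0) x :=
    fun x _ => by
      simpa using ((hasDerivAt_id x).const_mul c).const_sub γ |>.hasDerivWithinAt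
  have hinj : InjOn (fun x => γ - c * x) (Ioi 0) := fun x _ y _ h => by
    simpa [hc.ne'] using h
  rw [← himage, lintegral_image_eq_lintegral_abs_deriv_mul measurableSet_Ioi hderiv hinj,
    ← lintegral_const_mul' _ _ ENNReal.ofReal_ne_top]
  refine setLIntegral_congr_fun measurableSet_Ioi fun x (hx : 0 < x) => ?_
  have h1 : ξ - (γ - c * x) = c * (1 + x) := by ring
  have h2 : γ - (γ - c * x) = c * x := by ring
  have hpow :
      c * ((c * (1 + x)) ^ a * (c * x) ^ b) = c ^ (a + b + 1) * (x ^ b * (1 + x) ^ a) := by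
    rw [Real.mul_rpow hc.le (by positivity), Real.mul_rpow hc.le hx.le, Real.rpow_add hc,
      Real.rpow_add hc, Real.rpow_one]
    ring
  rw [h1, h2, abs_neg, abs_of_pos hc, ← ENNReal.ofReal_mul (by positivity),
    ← ENNReal.ofReal_mul hc.le, hpow, ENNReal.ofReal_mul (by positivity)]

theorem stmt_2_general (α ξ : ℝ)
    (f : ℝ → ℝ) (hf : Measurable f) :
    (∫⁻ η in Ioo (0:ℝ) ξ, ENNReal.ofReal ((ξ - η) ^ (-α - 1)) *
        ∫⁻ γ in Ioo η ξ, ENNReal.ofReal (|f γ| * (γ - η) ^ (-α))) ≤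
      (∫⁻ x in Ioi (0:ℝ), ENNReal.ofReal (x ^ (-α) * (1 + x) ^ (-1 - α))) *
        ∫⁻ γ in Ioo (0:ℝ) ξ, ENNReal.ofReal (|f γ| * (ξ - γ) ^ (-(2 * α))) := by
  set B := ∫⁻ x in Ioi (0:ℝ), ENNReal.ofReal (x ^ (-α) * (1 + x) ^ (-1 - α))
  have hinner : ∀ γ ∈ Ioo 0 ξ, ∫⁻ η in Ioo 0 γ,
      ENNReal.ofReal ((ξ - η) ^ (-α - 1)) * ENNReal.ofReal (|f γ| * (γ - η) ^ (-α)) ≤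
        B * ENNReal.ofReal (|f γ| * (ξ - γ) ^ (-(2 * α))) := by
    intro γ hγ
    have hexp : -α - 1 + -α + 1 = -(2 * α) := by ring
    simp_rw [ENNReal.ofReal_mul (abs_nonneg (f γ)), mul_left_comm _ (ENNReal.ofReal |f γ|)]
    calc _ ≤ ∫⁻ η in Iio γ, ENNReal.ofReal |f γ| *
          (ENNReal.ofReal ((ξ - η) ^ (-α - 1)) * ENNReal.ofReal ((γ - η) ^ (-α))) :=
          lintegral_mono_set Ioo_subset_Iio_self
      _ = _ := by
        rw [lintegral_const_mul' _ _ ENNReal.ofReal_ne_top,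
          setLIntegral_Iio_rpow_sub_mul_rpow_sub _ _ hγ.2, hexp, neg_sub_comm α]
        ring
  calc _ = ∫⁻ η in Ioo 0 ξ, ∫⁻ γ in Ioo η ξ,
        ENNReal.ofReal ((ξ - η) ^ (-α - 1)) * ENNReal.ofReal (|f γ| * (γ - η) ^ (-α)) := by
        simp_rw [lintegral_const_mul' _ _ ENNReal.ofReal_ne_top]
    _ = ∫⁻ γ in Ioo 0 ξ, ∫⁻ η in Ioo 0 γ,
        ENNReal.ofReal ((ξ - η) ^ (-α - 1)) * ENNReal.ofReal (|f γ| * (γ - η) ^ (-α)) :=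
      setLIntegral_Ioo_Ioo_swap (by fun_prop)
    _ ≤ ∫⁻ γ in Ioo 0 ξ, B * ENNReal.ofReal (|f γ| * (ξ - γ) ^ (-(2 * α))) :=
      setLIntegral_mono (by fun_prop) hinner
    _ = _ := lintegral_const_mul _ (by fun_prop)

/-- the weighted kernel estimate for a measurable `f`. -/
theorem stmt_2 (α ξ : ℝ) (hα : 0 < α) (hα1 : α < 1) (hξ0 : 0 < ξ) (hξ1 : ξ ≤ 1)
    (f : ℝ → ℝ) (hf : Measurable f) :
    (∫⁻ η in Ioo (0:ℝ) ξ, ENNReal.ofReal ((ξ - η) ^ (-α - 1)) *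
        ∫⁻ γ in Ioo η ξ, ENNReal.ofReal (|f γ| * (γ - η) ^ (-α))) ≤
      (∫⁻ x in Ioi (0:ℝ), ENNReal.ofReal (x ^ (-α) * (1 + x) ^ (-1 - α))) *
        ∫⁻ γ in Ioo (0:ℝ) ξ, ENNReal.ofReal (|f γ| * (ξ - γ) ^ (-(2 * α))) :=
  stmt_2_general α ξ f hf
end

section
/- Let 0 < α < 1/2, let ξ ∈ (0, 1], let M₂ > 0, and let f: [0,1] → ℝ be measurable with |f(γ)| ≤ M₂ for all γ ∈ [0,1]. Then ∫₀^ξ (ξ − η)^{−α−1} ( ∫_η^ξ |f(γ)| (γ − η)^{−α} dγ ) dη ≤ M₂ · B(2α, 1−α) · ξ^{1−2α} / (1 − 2α). -/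
/-!
Bounding `|f|` by `M₂`, the inner integral is at most `M₂ (ξ - η)^(1-α) / (1-α)`, so the
integrand in `η` is at most `M₂ (ξ - η)^(-2α) / (1-α)`, whose integral over `(0, ξ)` is
`M₂ ξ^(1-2α) / ((1-α)(1-2α))`. It remains to see `1/(1-α) ≤ B(2α, 1-α)`: for `α ≤ 1/2`,
`(1+x)^(-1-α) ≥ (1+x)^(α-2)`, and `∫₀^∞ x^(-α) (1+x)^(α-2) dx = 1/(1-α)` since
`(x/(1+x))^(1-α)/(1-α)` is a primitive.
-/

open MeasureTheory Set Filter Topology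

theorem lintegral_Ioo_sub_rpow (a b r : ℝ) (hab : a < b) (hr : -1 < r) :
    ∫⁻ x in Ioo a b, ENNReal.ofReal ((x - a) ^ r)
      = ENNReal.ofReal ((b - a) ^ (r + 1) / (r + 1)) := by
  have hint : IntervalIntegrable (fun x : ℝ => (x - a) ^ r) volume a b := by
    simpa using
      (intervalIntegral.intervalIntegrable_rpow' (a := 0) (b := b - a) hr).comp_sub_right a
  rw [setLIntegral_congr Ioo_ae_eq_Ioc, ← ofReal_integral_eq_lintegral_ofReal
      ((intervalIntegrable_iff_integrableOn_Ioc_of_le hab.le).1 hint) ?_]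
  · rw [← intervalIntegral.integral_of_le hab.le,
      intervalIntegral.integral_comp_sub_right (fun x => x ^ r) a, sub_self,
      integral_rpow (Or.inl hr), Real.zero_rpow (by linarith), sub_zero]
  · filter_upwards [ae_restrict_mem measurableSet_Ioc] with x hx
    exact Real.rpow_nonneg (by linarith [hx.1]) r

theorem lintegral_Ioo_rpow_sub (a b r : ℝ) (hab : a < b) (hr : -1 < r) :
    ∫⁻ x in Ioo a b, ENNReal.ofReal ((b - x) ^ r)
      = ENNReal.ofReal ((b - a) ^ (r + 1) / (r + 1)) := by
  have hint : IntervalIntegrable (fun x : ℝ => (b - x) ^ r) volume a b := by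
    simpa using
      (intervalIntegral.intervalIntegrable_rpow' (a := b - a) (b := 0) hr).comp_sub_left b
  rw [setLIntegral_congr Ioo_ae_eq_Ioc, ← ofReal_integral_eq_lintegral_ofReal
      ((intervalIntegrable_iff_integrableOn_Ioc_of_le hab.le).1 hint) ?_]
  · rw [← intervalIntegral.integral_of_le hab.le,
      intervalIntegral.integral_comp_sub_left (fun x => x ^ r) b, sub_self,
      integral_rpow (Or.inl hr), Real.zero_rpow (by linarith), sub_zero]
  · filter_upwards [ae_restrict_mem measurableSet_Ioc] with x hx
    exact Real.rpow_nonneg (by linarith [hx.2]) r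

theorem hasDerivAt_div_one_add_rpow {α x : ℝ} (hα : α ≠ 1) (hx : 0 < x) :
    HasDerivAt (fun x : ℝ => (x / (1 + x)) ^ (1 - α) / (1 - α))
      (x ^ (-α) * (1 + x) ^ (α - 2)) x := by
  have h1x : 0 < 1 + x := by linarith
  have hu : HasDerivAt (fun x : ℝ => x / (1 + x)) (((1 + x) ^ 2)⁻¹) x := by
    refine ((hasDerivAt_id x).div ((hasDerivAt_id x).const_add 1) h1x.ne').congr_deriv ?_
    simp only [id]
    ring
  refine ((hu.rpow_const (p := 1 - α) (Or.inl (by positivity))).div_const (1 - α)).congr_deriv ?_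
  rw [show 1 - α - 1 = -α by ring, Real.div_rpow hx.le h1x.le, Real.rpow_neg h1x.le,
    Real.rpow_sub h1x, Real.rpow_two]
  field_simp [sub_ne_zero.2 hα.symm]

theorem lintegral_Ioi_rpow_mul_one_add_rpow {α : ℝ} (hα : α < 1) :
    ∫⁻ x in Ioi (0 : ℝ), ENNReal.ofReal (x ^ (-α) * (1 + x) ^ (α - 2))
      = ENNReal.ofReal (1 / (1 - α)) := by
  have h1α : 0 < 1 - α := by linarith
  have hcont : ContinuousWithinAt (fun x : ℝ => (x / (1 + x)) ^ (1 - α) / (1 - α)) (Ici 0) 0 := by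
    exact (((ContinuousAt.div continuousAt_id (by fun_prop) (by norm_num)).rpow_const
      (Or.inr h1α.le)).div_const _).continuousWithinAt
  have hderiv : ∀ x ∈ Ioi (0 : ℝ), HasDerivAt (fun x : ℝ => (x / (1 + x)) ^ (1 - α) / (1 - α))
      (x ^ (-α) * (1 + x) ^ (α - 2)) x :=
    fun x hx => hasDerivAt_div_one_add_rpow hα.ne hx
  have hnonneg : ∀ x ∈ Ioi (0 : ℝ), 0 ≤ x ^ (-α) * (1 + x) ^ (α - 2) := fun x hx =>
    mul_nonneg (Real.rpow_nonneg (le_of_lt hx) _) (Real.rpow_nonneg (by linarith [mem_Ioi.1 hx]) _)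
  have hlim : Tendsto (fun x : ℝ => (x / (1 + x)) ^ (1 - α) / (1 - α)) atTop
      (𝓝 (1 / (1 - α))) := by
    have hratio : Tendsto (fun x : ℝ => x / (1 + x)) atTop (𝓝 1) := by
      have h := (tendsto_inv_atTop_zero.comp
        (tendsto_atTop_add_const_left _ 1 tendsto_id)).const_sub (1 : ℝ)
      rw [sub_zero] at h
      refine h.congr' ?_
      filter_upwards [eventually_gt_atTop (0 : ℝ)] with x hx
      have : (1 + x) ≠ 0 := by linarith
      simp only [Function.comp_apply, id]
      field_simp
      ring
    simpa using (hratio.rpow_const (Or.inl one_ne_zero)).div_const (1 - α)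
  rw [← ofReal_integral_eq_lintegral_ofReal
      (integrableOn_Ioi_deriv_of_nonneg hcont hderiv hnonneg hlim)
      ((ae_restrict_iff' measurableSet_Ioi).2 (Eventually.of_forall hnonneg)),
    integral_Ioi_of_hasDerivAt_of_nonneg hcont hderiv hnonneg hlim]
  simp [Real.zero_rpow h1α.ne']

theorem one_div_one_sub_le_lintegral_beta {α : ℝ} (hα : α ≤ 1 / 2) :
    ENNReal.ofReal (1 / (1 - α))
      ≤ ∫⁻ x in Ioi (0 : ℝ), ENNReal.ofReal (x ^ (-α) * (1 + x) ^ (-1 - α)) := by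
  rw [← lintegral_Ioi_rpow_mul_one_add_rpow (by linarith)]
  refine setLIntegral_mono' measurableSet_Ioi fun x hx => ENNReal.ofReal_le_ofReal ?_
  exact mul_le_mul_of_nonneg_left
    (Real.rpow_le_rpow_of_exponent_le (by linarith [mem_Ioi.1 hx]) (by linarith))
    (Real.rpow_nonneg (le_of_lt hx) _)

theorem lintegral_Ioo_abs_mul_sub_rpow_le {f : ℝ → ℝ} {a b r M : ℝ} (hab : a < b) (hr : -1 < r)
    (hf : ∀ γ ∈ Ioo a b, |f γ| ≤ M) :
    ∫⁻ γ in Ioo a b, ENNReal.ofReal (|f γ| * (γ - a) ^ r)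
      ≤ ENNReal.ofReal M * ENNReal.ofReal ((b - a) ^ (r + 1) / (r + 1)) := by
  rw [← lintegral_Ioo_sub_rpow a b r hab hr, ← lintegral_const_mul' _ _ ENNReal.ofReal_ne_top]
  refine setLIntegral_mono' measurableSet_Ioo fun γ hγ => ?_
  rw [ENNReal.ofReal_mul (abs_nonneg _)]
  gcongr
  exact hf γ hγ

theorem rpow_mul_lintegral_Ioo_abs_mul_sub_rpow_le {f : ℝ → ℝ} {a b α M : ℝ} (hab : a < b)
    (hα : α < 1) (hf : ∀ γ ∈ Ioo a b, |f γ| ≤ M) :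
    ENNReal.ofReal ((b - a) ^ (-α - 1)) *
        ∫⁻ γ in Ioo a b, ENNReal.ofReal (|f γ| * (γ - a) ^ (-α))
      ≤ ENNReal.ofReal M * ENNReal.ofReal (1 / (1 - α)) *
          ENNReal.ofReal ((b - a) ^ (-(2 * α))) := by
  have hba : 0 < b - a := sub_pos.2 hab
  have hpow : (b - a) ^ (-α - 1) * ((b - a) ^ (-α + 1) / (-α + 1))
      = 1 / (1 - α) * (b - a) ^ (-(2 * α)) := by
    rw [neg_add_eq_sub, show -(2 * α) = (-α - 1) + (1 - α) by ring, Real.rpow_add hba]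
    ring
  calc _ ≤ ENNReal.ofReal ((b - a) ^ (-α - 1)) *
        (ENNReal.ofReal M * ENNReal.ofReal ((b - a) ^ (-α + 1) / (-α + 1))) := by
        gcongr
        exact lintegral_Ioo_abs_mul_sub_rpow_le hab (by linarith) hf
    _ = _ := by
        rw [mul_left_comm, ← ENNReal.ofReal_mul (by positivity), hpow,
          ENNReal.ofReal_mul (one_div_pos.2 (sub_pos.2 hα)).le, mul_assoc]

theorem stmt_3_general (α ξ M₂ : ℝ) (hα1 : α < 1/2) (hξ0 : 0 < ξ) (hξ1 : ξ ≤ 1)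
    (f : ℝ → ℝ) (hbd : ∀ γ ∈ Icc (0:ℝ) 1, |f γ| ≤ M₂) :
    (∫⁻ η in Ioo (0:ℝ) ξ, ENNReal.ofReal ((ξ - η) ^ (-α - 1)) *
        ∫⁻ γ in Ioo η ξ, ENNReal.ofReal (|f γ| * (γ - η) ^ (-α))) ≤
      ENNReal.ofReal M₂ *
        (∫⁻ x in Ioi (0:ℝ), ENNReal.ofReal (x ^ (-α) * (1 + x) ^ (-1 - α))) *
        ENNReal.ofReal (ξ ^ (1 - 2 * α) / (1 - 2 * α)) := by
  have hpointwise : ∀ η ∈ Ioo (0 : ℝ) ξ,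
      ENNReal.ofReal ((ξ - η) ^ (-α - 1)) *
          ∫⁻ γ in Ioo η ξ, ENNReal.ofReal (|f γ| * (γ - η) ^ (-α))
        ≤ ENNReal.ofReal M₂ * ENNReal.ofReal (1 / (1 - α)) *
            ENNReal.ofReal ((ξ - η) ^ (-(2 * α))) := fun η hη =>
    rpow_mul_lintegral_Ioo_abs_mul_sub_rpow_le hη.2 (by linarith) fun γ hγ =>
      hbd γ ⟨by linarith [hη.1, hγ.1], by linarith [hγ.2]⟩
  have hintegral : ∫⁻ η in Ioo (0 : ℝ) ξ, ENNReal.ofReal ((ξ - η) ^ (-(2 * α)))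
      = ENNReal.ofReal (ξ ^ (1 - 2 * α) / (1 - 2 * α)) := by
    rw [lintegral_Ioo_rpow_sub 0 ξ _ hξ0 (by linarith), sub_zero, neg_add_eq_sub]
  calc _ ≤ ∫⁻ η in Ioo (0 : ℝ) ξ, ENNReal.ofReal M₂ * ENNReal.ofReal (1 / (1 - α)) *
          ENNReal.ofReal ((ξ - η) ^ (-(2 * α))) := setLIntegral_mono' measurableSet_Ioo hpointwise
    _ = ENNReal.ofReal M₂ * ENNReal.ofReal (1 / (1 - α)) *
          ENNReal.ofReal (ξ ^ (1 - 2 * α) / (1 - 2 * α)) := by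
        rw [lintegral_const_mul' _ _ (by finiteness), hintegral]
    _ ≤ _ := by
        gcongr
        exact one_div_one_sub_le_lintegral_beta hα1.le

/-- the bounded-integrand version of the kernel estimate. -/
theorem stmt_3 (α ξ M₂ : ℝ) (hα : 0 < α) (hα1 : α < 1/2) (hξ0 : 0 < ξ) (hξ1 : ξ ≤ 1)
    (hM₂ : 0 < M₂) (f : ℝ → ℝ) (hf : Measurable f)
    (hbd : ∀ γ ∈ Icc (0:ℝ) 1, |f γ| ≤ M₂) :
    (∫⁻ η in Ioo (0:ℝ) ξ, ENNReal.ofReal ((ξ - η) ^ (-α - 1)) *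
        ∫⁻ γ in Ioo η ξ, ENNReal.ofReal (|f γ| * (γ - η) ^ (-α))) ≤
      ENNReal.ofReal M₂ *
        (∫⁻ x in Ioi (0:ℝ), ENNReal.ofReal (x ^ (-α) * (1 + x) ^ (-1 - α))) *
        ENNReal.ofReal (ξ ^ (1 - 2 * α) / (1 - 2 * α)) :=
  stmt_3_general α ξ M₂ hα1 hξ0 hξ1 f hbd
end

section
/- Let 0 < α < 1, let ξ ∈ (0, 1], and let f: [0,1] → ℝ be measurable. Then ∫₀^ξ (ξ − η)^{−α−1} ( ∫_η^ξ ∫_η^γ |f(γ) − f(δ)| / (γ − δ)^{α+1} dδ dγ ) dη ≤ α^{−1} · ∫₀^ξ (ξ − γ)^{−α} ( ∫₀^γ |f(γ) − f(δ)| / (γ − δ)^{α+1} dδ ) dγ, as an inequality in [0, ∞]. -/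
open MeasureTheory Set
open scoped ENNReal

noncomputable def gg (α : ℝ) (f : ℝ → ℝ) (γ δ : ℝ) : ℝ≥0∞ :=
  ENNReal.ofReal (|f γ - f δ| / (γ - δ) ^ (α + 1))

noncomputable def KK (α ξ : ℝ) (f : ℝ → ℝ) (η γ δ : ℝ) : ℝ≥0∞ :=
  if 0 < η ∧ η < δ ∧ δ < γ ∧ γ < ξ then
    ENNReal.ofReal ((ξ - η) ^ (-α - 1)) * gg α f γ δ else 0

lemma gg_meas (α : ℝ) (f : ℝ → ℝ) (hf : Measurable f) :
    Measurable (fun p : ℝ × ℝ => gg α f p.1 p.2) := by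
  unfold gg; fun_prop

lemma KK_meas (α ξ : ℝ) (f : ℝ → ℝ) (hf : Measurable f) :
    Measurable (fun q : ℝ × ℝ × ℝ => KK α ξ f q.1 q.2.1 q.2.2) := by
  unfold KK
  apply Measurable.ite
  · apply MeasurableSet.inter
    · exact measurableSet_lt measurable_const measurable_fst
    apply MeasurableSet.inter
    · exact measurableSet_lt measurable_fst measurable_snd.snd
    apply MeasurableSet.inter
    · exact measurableSet_lt measurable_snd.snd measurable_snd.fst
    · exact measurableSet_lt measurable_snd.fst measurable_const
  · exact (by fun_prop : Measurable fun q : ℝ × ℝ × ℝ =>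
      ENNReal.ofReal ((ξ - q.1) ^ (-α - 1))).mul
      ((gg_meas α f hf).comp (measurable_snd.fst.prodMk measurable_snd.snd))
  · exact measurable_const

lemma key1 (α ξ δ : ℝ) (hα : 0 < α) (hδ : 0 < δ) (hδξ : δ < ξ) :
    ∫⁻ η in Ioo (0:ℝ) δ, ENNReal.ofReal ((ξ - η) ^ (-α - 1)) ≤
      ENNReal.ofReal (α⁻¹ * (ξ - δ) ^ (-α)) := by
  have hcont : ContinuousOn (fun η : ℝ => (ξ - η) ^ (-α - 1)) (Icc 0 δ) := by
    apply ContinuousOn.rpow_const (continuousOn_const.sub continuousOn_id)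
    intro x hx
    refine Or.inl ?_
    simp only [mem_Icc] at hx
    have : (0:ℝ) < ξ - x := by linarith [hx.2]
    exact ne_of_gt this
  have hint : IntegrableOn (fun η : ℝ => (ξ - η) ^ (-α - 1)) (Ioo 0 δ) :=
    (hcont.integrableOn_Icc).mono_set Ioo_subset_Icc_self
  rw [← ofReal_integral_eq_lintegral_ofReal hint]
  · apply ENNReal.ofReal_le_ofReal
    have heq : ∫ η in Ioo (0:ℝ) δ, (ξ - η) ^ (-α - 1) =
        (ξ ^ (-α) - (ξ - δ) ^ (-α)) / (-α) := by
      rw [← integral_Ioc_eq_integral_Ioo, ← intervalIntegral.integral_of_le hδ.le]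
      rw [intervalIntegral.integral_comp_sub_left (fun x => x ^ (-α - 1)) ξ]
      rw [integral_rpow (Or.inr ⟨by intro h; exact absurd (by linarith : α = 0) (ne_of_gt hα), by
        rw [uIcc_of_le (by linarith)]
        intro h
        simp only [mem_Icc] at h
        linarith [h.1]⟩)]
      norm_num
    rw [heq]
    have hB : 0 ≤ ξ ^ (-α) := Real.rpow_nonneg (by linarith) _
    have h2 : (ξ ^ (-α) - (ξ - δ) ^ (-α)) / (-α) =
        ((ξ - δ) ^ (-α) - ξ ^ (-α)) / α := by
      rw [div_neg, ← neg_div, neg_sub]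
    rw [h2, div_eq_inv_mul]
    exact mul_le_mul_of_nonneg_left (by linarith) (inv_nonneg.2 hα.le)
  · filter_upwards [ae_restrict_mem measurableSet_Ioo] with x hx
    exact Real.rpow_nonneg (by simp only [mem_Ioo] at hx; linarith [hx.2]) _


/-- the triple-integral estimate for the increment term. -/
theorem stmt_4 (α ξ : ℝ) (hα : 0 < α) (hα1 : α < 1) (hξ0 : 0 < ξ) (hξ1 : ξ ≤ 1)
    (f : ℝ → ℝ) (hf : Measurable f) :
    (∫⁻ η in Ioo (0:ℝ) ξ, ENNReal.ofReal ((ξ - η) ^ (-α - 1)) *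
        ∫⁻ γ in Ioo η ξ, ∫⁻ δ in Ioo η γ,
          ENNReal.ofReal (|f γ - f δ| / (γ - δ) ^ (α + 1))) ≤
      ENNReal.ofReal α⁻¹ *
        ∫⁻ γ in Ioo (0:ℝ) ξ, ENNReal.ofReal ((ξ - γ) ^ (-α)) *
          ∫⁻ δ in Ioo (0:ℝ) γ, ENNReal.ofReal (|f γ - f δ| / (γ - δ) ^ (α + 1)) := by
  show (∫⁻ η in Ioo (0:ℝ) ξ, ENNReal.ofReal ((ξ - η) ^ (-α - 1)) *
        ∫⁻ γ in Ioo η ξ, ∫⁻ δ in Ioo η γ, gg α f γ δ) ≤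
      ENNReal.ofReal α⁻¹ *
        ∫⁻ γ in Ioo (0:ℝ) ξ, ENNReal.ofReal ((ξ - γ) ^ (-α)) *
          ∫⁻ δ in Ioo (0:ℝ) γ, gg α f γ δ
  have hK := KK_meas α ξ f hf
  -- Step 1 : rewrite LHS as an unrestricted triple integral of KK
  have eq1 : (∫⁻ η in Ioo (0:ℝ) ξ, ENNReal.ofReal ((ξ - η) ^ (-α - 1)) *
        ∫⁻ γ in Ioo η ξ, ∫⁻ δ in Ioo η γ, gg α f γ δ) =
      ∫⁻ η, ∫⁻ γ, ∫⁻ δ, KK α ξ f η γ δ := by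
    rw [← lintegral_indicator measurableSet_Ioo]
    apply lintegral_congr
    intro η
    by_cases hη : η ∈ Ioo (0:ℝ) ξ
    · rw [indicator_of_mem hη]
      have hγeq : ∀ γ, ∫⁻ δ, KK α ξ f η γ δ =
          (Ioo η ξ).indicator (fun γ => ENNReal.ofReal ((ξ - η) ^ (-α - 1)) *
            ∫⁻ δ in Ioo η γ, gg α f γ δ) γ := by
        intro γ
        by_cases hγ : γ ∈ Ioo η ξ
        · rw [indicator_of_mem hγ, ← lintegral_const_mul' _ _ ENNReal.ofReal_ne_top,
              ← lintegral_indicator measurableSet_Ioo]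
          apply lintegral_congr
          intro δ
          by_cases hδ : δ ∈ Ioo η γ
          · rw [indicator_of_mem hδ, KK, if_pos ⟨hη.1, hδ.1, hδ.2, hγ.2⟩]
          · rw [indicator_of_notMem hδ, KK, if_neg]
            intro h
            exact hδ ⟨h.2.1, h.2.2.1⟩
        · rw [indicator_of_notMem hγ]
          have h0 : ∀ δ, KK α ξ f η γ δ = 0 := by
            intro δ
            rw [KK, if_neg]
            intro h
            exact hγ ⟨lt_trans h.2.1 h.2.2.1, h.2.2.2⟩
          simp [h0]
      rw [lintegral_congr hγeq, lintegral_indicator measurableSet_Ioo,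
          lintegral_const_mul' _ _ ENNReal.ofReal_ne_top]
    · rw [indicator_of_notMem hη]
      have h0 : ∀ γ δ, KK α ξ f η γ δ = 0 := by
        intro γ δ
        rw [KK, if_neg]
        intro h
        exact hη ⟨h.1, by linarith [h.2.1, h.2.2.1, h.2.2.2]⟩
      simp [h0]
  rw [eq1]
  -- Step 2 : Tonelli swaps, to integrate in η first
  have swap1 : (∫⁻ η, ∫⁻ γ, ∫⁻ δ, KK α ξ f η γ δ) =
      ∫⁻ γ, ∫⁻ η, ∫⁻ δ, KK α ξ f η γ δ := by
    apply lintegral_lintegral_swap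
    refine Measurable.aemeasurable
      (Measurable.lintegral_prod_right (f := fun (p : ℝ × ℝ) (δ : ℝ) => KK α ξ f p.1 p.2 δ) ?_)
    exact hK.comp (measurable_fst.fst.prodMk
      (measurable_fst.snd.prodMk measurable_snd))
  have swap2 : ∀ γ, (∫⁻ η, ∫⁻ δ, KK α ξ f η γ δ) =
      ∫⁻ δ, ∫⁻ η, KK α ξ f η γ δ := by
    intro γ
    apply lintegral_lintegral_swap
    exact (hK.comp (measurable_fst.prodMk
      (measurable_const.prodMk measurable_snd))).aemeasurable
  rw [swap1, lintegral_congr swap2]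
  -- Step 3 : pointwise estimate of the η-integral, and conclusion
  rw [← lintegral_const_mul' _ _ ENNReal.ofReal_ne_top,
      ← lintegral_indicator (μ := volume) measurableSet_Ioo
        (fun γ => ENNReal.ofReal α⁻¹ * (ENNReal.ofReal ((ξ - γ) ^ (-α)) *
          ∫⁻ δ in Ioo (0:ℝ) γ, gg α f γ δ))]
  apply lintegral_mono
  intro γ
  beta_reduce
  by_cases hγ : γ ∈ Ioo (0:ℝ) ξ
  · rw [indicator_of_mem hγ]
    rw [← lintegral_const_mul' _ _ ENNReal.ofReal_ne_top,
        ← lintegral_const_mul' _ _ ENNReal.ofReal_ne_top,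
        ← lintegral_indicator (μ := volume) measurableSet_Ioo
          (fun δ => ENNReal.ofReal α⁻¹ * (ENNReal.ofReal ((ξ - γ) ^ (-α)) * gg α f γ δ))]
    apply lintegral_mono
    intro δ
    beta_reduce
    by_cases hδ : δ ∈ Ioo (0:ℝ) γ
    · rw [indicator_of_mem hδ]
      have hKeq : ∀ η, KK α ξ f η γ δ =
          (Ioo (0:ℝ) δ).indicator
            (fun η => ENNReal.ofReal ((ξ - η) ^ (-α - 1)) * gg α f γ δ) η := by
        intro η
        by_cases hη : η ∈ Ioo (0:ℝ) δ
        · rw [indicator_of_mem hη, KK, if_pos ⟨hη.1, hη.2, hδ.2, hγ.2⟩]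
        · rw [indicator_of_notMem hη, KK, if_neg]
          intro h
          exact hη ⟨h.1, h.2.1⟩
      have hggtop : gg α f γ δ ≠ ⊤ := by rw [gg]; exact ENNReal.ofReal_ne_top
      rw [lintegral_congr hKeq, lintegral_indicator measurableSet_Ioo,
          lintegral_mul_const' _ _ hggtop]
      have hb1 : (∫⁻ η in Ioo (0:ℝ) δ, ENNReal.ofReal ((ξ - η) ^ (-α - 1))) ≤
          ENNReal.ofReal (α⁻¹ * (ξ - δ) ^ (-α)) :=
        key1 α ξ δ hα hδ.1 (lt_trans hδ.2 hγ.2)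
      have hb2 : ENNReal.ofReal (α⁻¹ * (ξ - δ) ^ (-α)) ≤
          ENNReal.ofReal (α⁻¹ * (ξ - γ) ^ (-α)) := by
        apply ENNReal.ofReal_le_ofReal
        apply mul_le_mul_of_nonneg_left _ (inv_nonneg.2 hα.le)
        apply Real.rpow_le_rpow_of_nonpos (by linarith [hγ.2]) (by linarith [hδ.2])
          (by linarith)
      calc (∫⁻ η in Ioo (0:ℝ) δ, ENNReal.ofReal ((ξ - η) ^ (-α - 1))) * gg α f γ δ
          ≤ ENNReal.ofReal (α⁻¹ * (ξ - γ) ^ (-α)) * gg α f γ δ :=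
            mul_le_mul_left (le_trans hb1 hb2) _
        _ = ENNReal.ofReal α⁻¹ * (ENNReal.ofReal ((ξ - γ) ^ (-α)) * gg α f γ δ) := by
            rw [ENNReal.ofReal_mul (inv_nonneg.2 hα.le), mul_assoc]
    · rw [indicator_of_notMem hδ]
      have h0 : ∀ η, KK α ξ f η γ δ = 0 := by
        intro η
        rw [KK, if_neg]
        intro h
        exact hδ ⟨lt_trans h.1 h.2.1, h.2.2.1⟩
      simp [h0]
  · rw [indicator_of_notMem hγ]
    have h0 : ∀ δ η, KK α ξ f η γ δ = 0 := by
      intro δ η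
      rw [KK, if_neg]
      intro h
      exact hγ ⟨by linarith [h.1, h.2.1, h.2.2.1], h.2.2.2⟩
    simp [h0]
end
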